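/- arXiv:1901.09697 — 4 statements merged into one kernel-verified Lean document; each statement's English description precedes it below -/
import Mathlib

section
/- If the mechanism (ν, κ, μ) satisfies (ε, δ)-Bayesian differential privacy, i.e. ∫_X ν({w : L(w, x') ≥ ε}) dμ(x') ≤ δ, then it satisfies (ε, δ)-weak Bayesian differential privacy: for every measurable set S ⊆ W, ν(S) ≤ e^ε · ∫_X κ(x')(S) dμ(x') + δ. -/
set_option autoImplicit false

open MeasureTheory ProbabilityTheory ENNReal

/-- Pointwise bound for a fixed `x'` with `ν ≪ κ x'`. -/
lemma bdp_pointwise_aux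
    {W : Type*} [MeasurableSpace W]
    (ν η : Measure W) [IsFiniteMeasure ν] [IsFiniteMeasure η]
    (hac : ν ≪ η) (ε : ℝ) (S : Set W) (hS : MeasurableSet S) :
    ν S ≤ ENNReal.ofReal (Real.exp ε) * η S
      + ν {w | ε ≤ Real.log ((ν.rnDeriv η w).toReal)} := by
  set f := ν.rnDeriv η with hf
  set B : Set W := {w | ε ≤ Real.log ((f w).toReal)} with hB
  have hfm : Measurable f := Measure.measurable_rnDeriv ν η
  have hBm : MeasurableSet B := by
    exact measurableSet_le measurable_const
      ((Real.measurable_log.comp (hfm.ennreal_toReal)))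
  have h1 : ν S ≤ ν (S \ B) + ν B := by
    calc ν S ≤ ν ((S \ B) ∪ B) := measure_mono (by intro w hw; by_cases h : w ∈ B <;> simp [h, hw])
    _ ≤ ν (S \ B) + ν B := measure_union_le _ _
  have h2 : ν (S \ B) = ∫⁻ w in S \ B, f w ∂η :=
    (Measure.setLIntegral_rnDeriv hac _).symm
  have h3 : ∫⁻ w in S \ B, f w ∂η ≤ ∫⁻ _ in S \ B, ENNReal.ofReal (Real.exp ε) ∂η := by
    refine setLIntegral_mono_ae measurable_const.aemeasurable ?_
    filter_upwards [Measure.rnDeriv_lt_top ν η] with w hw hwB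
    have hnB : ¬ ε ≤ Real.log ((f w).toReal) := hwB.2
    have hlt : Real.log ((f w).toReal) < ε := lt_of_not_ge hnB
    have htop : f w ≠ ⊤ := hw.ne
    rcases eq_or_ne ((f w).toReal) 0 with h0 | h0
    · rw [show f w = 0 from by
        have := ENNReal.toReal_eq_zero_iff (f w)
        rcases this.mp h0 with h | h
        · exact h
        · exact absurd h htop]
      exact zero_le
    · have hpos : 0 < (f w).toReal := lt_of_le_of_ne ENNReal.toReal_nonneg (Ne.symm h0)
      have : (f w).toReal < Real.exp ε := by
        calc (f w).toReal = Real.exp (Real.log ((f w).toReal)) := (Real.exp_log hpos).symm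
        _ < Real.exp ε := Real.exp_lt_exp.mpr hlt
      calc f w = ENNReal.ofReal ((f w).toReal) := (ENNReal.ofReal_toReal htop).symm
      _ ≤ ENNReal.ofReal (Real.exp ε) := ENNReal.ofReal_le_ofReal this.le
  have h4 : ∫⁻ _ in S \ B, ENNReal.ofReal (Real.exp ε) ∂η
      ≤ ENNReal.ofReal (Real.exp ε) * η S := by
    rw [setLIntegral_const]
    exact mul_le_mul_right (measure_mono Set.diff_subset) _
  calc ν S ≤ ν (S \ B) + ν B := h1
  _ ≤ ENNReal.ofReal (Real.exp ε) * η S + ν B := by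
      refine add_le_add_left ?_ _
      rw [h2]; exact h3.trans h4

/-- If the mechanism `(ν, κ, μ)` satisfies `(ε, δ)`-Bayesian differential
privacy, then it satisfies `(ε, δ)`-weak Bayesian differential privacy. -/
theorem bdp_implies_weak_bdp
    {X W : Type*} [MeasurableSpace X] [MeasurableSpace W]
    (μ : Measure X) [IsProbabilityMeasure μ]
    (ν : Measure W) [IsProbabilityMeasure ν]
    (κ : Kernel X W) [IsMarkovKernel κ]
    (hac : ∀ᵐ x' ∂μ, ν ≪ κ x')
    (ε : ℝ) (δ : ℝ≥0∞)
    (hBDP : ∫⁻ x', ν {w | ε ≤ Real.log ((ν.rnDeriv (κ x') w).toReal)} ∂μ ≤ δ) :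
    ∀ S : Set W, MeasurableSet S →
      ν S ≤ ENNReal.ofReal (Real.exp ε) * ∫⁻ x', (κ x') S ∂μ + δ := by
  intro S hS
  have key : ∀ᵐ x' ∂μ, ν S ≤ ENNReal.ofReal (Real.exp ε) * (κ x') S
      + ν {w | ε ≤ Real.log ((ν.rnDeriv (κ x') w).toReal)} := by
    filter_upwards [hac] with x' h
    exact bdp_pointwise_aux ν (κ x') h ε S hS
  have h1 : ν S = ∫⁻ _, ν S ∂μ := by simp
  rw [h1]
  calc ∫⁻ _, ν S ∂μ
      ≤ ∫⁻ x', (ENNReal.ofReal (Real.exp ε) * (κ x') S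
          + ν {w | ε ≤ Real.log ((ν.rnDeriv (κ x') w).toReal)}) ∂μ :=
        lintegral_mono_ae key
  _ = ENNReal.ofReal (Real.exp ε) * ∫⁻ x', (κ x') S ∂μ
      + ∫⁻ x', ν {w | ε ≤ Real.log ((ν.rnDeriv (κ x') w).toReal)} ∂μ := by
        rw [lintegral_add_left ((κ.measurable_coe hS).const_mul _) , lintegral_const_mul _ (κ.measurable_coe hS)]
  _ ≤ ENNReal.ofReal (Real.exp ε) * ∫⁻ x', (κ x') S ∂μ + δ := add_le_add_right hBDP _
end

section
/- Let the mechanism (ν, κ, μ) satisfy (ε, δ)-Bayesian differential privacy, and let F be a Markov kernel from the outcome space W to a measurable space W' (a data-independent randomised post-processing). Then the post-processed mechanism satisfies (ε, δ)-weak Bayesian differential privacy: for every measurable set T ⊆ W', (ν.bind F)(T) ≤ e^ε · ∫_X ((κ(x')).bind F)(T) dμ(x') + δ, where ρ.bind F denotes the law of F(w) when w ~ ρ. -/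
set_option autoImplicit false

open MeasureTheory ProbabilityTheory ENNReal

/-- Post-processing: if the mechanism `(ν, κ, μ)` satisfies
`(ε, δ)`-Bayesian differential privacy and `F` is a Markov kernel (data-independent
randomised post-processing), then the post-processed mechanism satisfies
`(ε, δ)`-weak Bayesian differential privacy. -/
theorem bdp_postprocessing
    {X W W' : Type*} [MeasurableSpace X] [MeasurableSpace W] [MeasurableSpace W']
    (μ : Measure X) [IsProbabilityMeasure μ]
    (ν : Measure W) [IsProbabilityMeasure ν]
    (κ : Kernel X W) [IsMarkovKernel κ]
    (hac : ∀ᵐ x' ∂μ, ν ≪ κ x')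
    (ε : ℝ) (δ : ℝ≥0∞)
    (hBDP : ∫⁻ x', ν {w | ε ≤ Real.log ((ν.rnDeriv (κ x') w).toReal)} ∂μ ≤ δ)
    (F : Kernel W W') [IsMarkovKernel F] :
    ∀ T : Set W', MeasurableSet T →
      (ν.bind F) T ≤ ENNReal.ofReal (Real.exp ε) * ∫⁻ x', ((κ x').bind F) T ∂μ + δ := by
  intro T hT
  set c := ENNReal.ofReal (Real.exp ε) with hc
  have hF : Measurable fun w => F w T := Kernel.measurable_coe F hT
  -- pointwise (in x') key bound
  have key : ∀ᵐ x' ∂μ,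
      (ν.bind F) T ≤ c * ((κ x').bind F) T
        + ν {w | ε ≤ Real.log ((ν.rnDeriv (κ x') w).toReal)} := by
    filter_upwards [hac] with x' hx
    have hrn : Measurable (ν.rnDeriv (κ x')) := Measure.measurable_rnDeriv _ _
    set B := {w | ε ≤ Real.log ((ν.rnDeriv (κ x') w).toReal)} with hB
    have hBm : MeasurableSet B :=
      measurableSet_le measurable_const (hrn.ennreal_toReal.log)
    have hbind : (ν.bind F) T = ∫⁻ w, F w T ∂ν :=
      Measure.bind_apply hT (Kernel.measurable F).aemeasurable
    have hbind2 : ((κ x').bind F) T = ∫⁻ w, F w T ∂(κ x') :=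
      Measure.bind_apply hT (Kernel.measurable F).aemeasurable
    rw [hbind, hbind2]
    have hsplit : ∫⁻ w, F w T ∂ν
        = ∫⁻ w in B, F w T ∂ν + ∫⁻ w in Bᶜ, F w T ∂ν :=
      (lintegral_add_compl _ hBm).symm
    have hbad : ∫⁻ w in B, F w T ∂ν ≤ ν B := by
      calc ∫⁻ w in B, F w T ∂ν ≤ ∫⁻ _ in B, 1 ∂ν := by
            apply lintegral_mono
            intro w
            exact prob_le_one
        _ = ν B := by simp
    have hgood : ∫⁻ w in Bᶜ, F w T ∂ν ≤ c * ∫⁻ w, F w T ∂(κ x') := by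
      have hν : (κ x').withDensity (ν.rnDeriv (κ x')) = ν :=
        Measure.withDensity_rnDeriv_eq ν (κ x') hx
      calc ∫⁻ w in Bᶜ, F w T ∂ν
          = ∫⁻ w in Bᶜ, ν.rnDeriv (κ x') w * F w T ∂(κ x') := by
            have h2 := setLIntegral_withDensity_eq_setLIntegral_mul (κ x') hrn hF hBm.compl
            rw [hν] at h2
            rw [h2]
            simp [Pi.mul_apply]
        _ ≤ ∫⁻ w in Bᶜ, c * F w T ∂(κ x') := by
            apply setLIntegral_mono_ae (hF.const_mul c).aemeasurable
            filter_upwards [Measure.rnDeriv_lt_top ν (κ x')] with w hw hwB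
            have hlog : Real.log ((ν.rnDeriv (κ x') w).toReal) < ε := not_le.mp hwB
            have hy : ((ν.rnDeriv (κ x') w).toReal) < Real.exp ε := by
              rcases lt_or_eq_of_le (ENNReal.toReal_nonneg :
                  (0:ℝ) ≤ (ν.rnDeriv (κ x') w).toReal) with h0 | h0
              · calc (ν.rnDeriv (κ x') w).toReal
                      = Real.exp (Real.log ((ν.rnDeriv (κ x') w).toReal)) :=
                        (Real.exp_log h0).symm
                  _ < Real.exp ε := Real.exp_lt_exp.mpr hlog
              · rw [← h0]; exact Real.exp_pos ε
            have hle : ν.rnDeriv (κ x') w ≤ c := by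
              rw [← ENNReal.ofReal_toReal hw.ne, hc]
              exact ENNReal.ofReal_le_ofReal hy.le
            exact mul_le_mul_left hle _
        _ = c * ∫⁻ w in Bᶜ, F w T ∂(κ x') := lintegral_const_mul c hF
        _ ≤ c * ∫⁻ w, F w T ∂(κ x') := by
            gcongr
            exact Measure.restrict_le_self
    calc ∫⁻ w, F w T ∂ν = ∫⁻ w in B, F w T ∂ν + ∫⁻ w in Bᶜ, F w T ∂ν := hsplit
      _ ≤ ν B + c * ∫⁻ w, F w T ∂(κ x') := add_le_add hbad hgood
      _ = c * ∫⁻ w, F w T ∂(κ x') + ν B := add_comm _ _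
  -- measurability of x' ↦ ((κ x').bind F) T
  have hmeas : Measurable fun x' => ((κ x').bind F) T := by
    have : ∀ x', ((κ x').bind F) T = (F ∘ₖ κ) x' T := by
      intro x'; rw [Kernel.comp_apply]
    simp only [this]
    exact Kernel.measurable_coe (F ∘ₖ κ) hT
  calc (ν.bind F) T = ∫⁻ _, (ν.bind F) T ∂μ := by simp
    _ ≤ ∫⁻ x', (c * ((κ x').bind F) T
          + ν {w | ε ≤ Real.log ((ν.rnDeriv (κ x') w).toReal)}) ∂μ :=
        lintegral_mono_ae key
    _ = ∫⁻ x', c * ((κ x').bind F) T ∂μ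
          + ∫⁻ x', ν {w | ε ≤ Real.log ((ν.rnDeriv (κ x') w).toReal)} ∂μ :=
        lintegral_add_left (hmeas.const_mul c) _
    _ ≤ c * ∫⁻ x', ((κ x').bind F) T ∂μ + δ := by
        rw [lintegral_const_mul c hmeas]
        exact add_le_add le_rfl hBDP
end

section
/- Subsampled Gaussian mechanism, first direction (exact formula): let σ > 0, q ∈ [0, 1], g, g' ∈ ℝ, and set d = g' − g. Let P be the Gaussian measure on ℝ with mean g and variance σ², and let M = (1 − q)·P + q·N(g', σ²) be the subsampled-Gaussian mixture. Then for every natural number λ, ∫_ℝ ((dM/dP)(w))^{λ+1} dP(w) = Σ_{k=0}^{λ+1} C(λ+1, k) · q^k · (1 − q)^{λ+1−k} · exp((k² − k)·d² / (2σ²)); equivalently, exp(λ · D_{λ+1}(M ‖ P)) equals the expectation of exp((K² − K)·d² / (2σ²)) for K ~ Binomial(λ+1, q). -/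
/-!
Against `P = N(g, σ²)`, the Gaussian `N(g', σ²)` has density `exp (a x + b)` with
`a = d / σ²`, so `dM/dP = (1 - q) + q exp (a x + b)`. Expanding the `(λ+1)`-st power binomially,
the `k`-th term needs `∫ exp (k (a x + b)) dP`, which the Gaussian moment generating function
evaluates to `exp ((k² - k) d² / (2σ²))`.
-/

set_option autoImplicit false

open MeasureTheory ProbabilityTheory ENNReal
open scoped NNReal

section WithDensity

variable {α : Type*} [MeasurableSpace α] (μ : Measure α)

lemma withDensity_const_add_const_mul (a b : ℝ≥0∞) {h : α → ℝ≥0∞} (hh : Measurable h) :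
    μ.withDensity (fun x ↦ a + b * h x) = a • μ + b • μ.withDensity h := by
  rw [← withDensity_smul b hh, ← withDensity_const, ← withDensity_add_right _ (hh.const_smul b)]
  rfl

lemma lintegral_const_add_const_mul_pow (a b : ℝ≥0∞) {h : α → ℝ≥0∞} (hh : Measurable h)
    (n : ℕ) :
    ∫⁻ x, (a + b * h x) ^ n ∂μ =
      ∑ k ∈ Finset.range (n + 1), n.choose k * b ^ k * a ^ (n - k) * ∫⁻ x, h x ^ k ∂μ := by
  simp_rw [add_comm a, add_pow]
  rw [lintegral_finsetSum _ fun k _ ↦ by fun_prop]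
  refine Finset.sum_congr rfl fun k _ ↦ ?_
  rw [← lintegral_const_mul _ (by fun_prop)]
  congr 1 with x
  ring

end WithDensity

lemma lintegral_exp_affine_gaussianReal (m : ℝ) (v : ℝ≥0) (t c : ℝ) :
    ∫⁻ x, ENNReal.ofReal (Real.exp (t * x + c)) ∂gaussianReal m v =
      ENNReal.ofReal (Real.exp (m * t + v * t ^ 2 / 2 + c)) := by
  simp_rw [Real.exp_add _ c]
  rw [← ofReal_integral_eq_lintegral_ofReal
      ((integrable_exp_mul_gaussianReal t).mul_const _) (ae_of_all _ fun _ ↦ by positivity),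
    integral_mul_const, ← congrFun mgf_fun_id_gaussianReal t, mgf]

noncomputable def gaussianDensityRatio (m m' : ℝ) (v : ℝ≥0) (x : ℝ) : ℝ :=
  Real.exp ((m' - m) / v * x - (m' ^ 2 - m ^ 2) / (2 * v))

@[fun_prop]
lemma measurable_gaussianDensityRatio (m m' : ℝ) (v : ℝ≥0) :
    Measurable (gaussianDensityRatio m m' v) := by
  unfold gaussianDensityRatio
  fun_prop

lemma gaussianPDFReal_eq_mul_densityRatio (m m' : ℝ) {v : ℝ≥0} (hv : v ≠ 0) (x : ℝ) :
    gaussianPDFReal m' v x = gaussianPDFReal m v x * gaussianDensityRatio m m' v x := by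
  have hv' : (v : ℝ) ≠ 0 := mod_cast hv
  rw [gaussianPDFReal, gaussianPDFReal, gaussianDensityRatio, mul_assoc _ (Real.exp _),
    ← Real.exp_add]
  congr 2
  field_simp
  ring

lemma gaussianReal_eq_withDensity_densityRatio (m m' : ℝ) {v : ℝ≥0} (hv : v ≠ 0) :
    gaussianReal m' v =
      (gaussianReal m v).withDensity fun x ↦ ENNReal.ofReal (gaussianDensityRatio m m' v x) := by
  rw [gaussianReal_of_var_ne_zero _ hv, gaussianReal_of_var_ne_zero _ hv,
    ← withDensity_mul _ (measurable_gaussianPDF m v) (by fun_prop)]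
  congr 1 with x
  rw [Pi.mul_apply, gaussianPDF, gaussianPDF, ← ENNReal.ofReal_mul (gaussianPDFReal_nonneg _ _ _),
    ← gaussianPDFReal_eq_mul_densityRatio m m' hv]

lemma lintegral_densityRatio_pow_gaussianReal (m m' : ℝ) {v : ℝ≥0} (hv : v ≠ 0) (k : ℕ) :
    ∫⁻ x, ENNReal.ofReal (gaussianDensityRatio m m' v x) ^ k ∂gaussianReal m v =
      ENNReal.ofReal (Real.exp (((k : ℝ) ^ 2 - k) * (m' - m) ^ 2 / (2 * v))) := by
  have hv' : (v : ℝ) ≠ 0 := mod_cast hv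
  have hpow : ∀ x : ℝ,
      ENNReal.ofReal (gaussianDensityRatio m m' v x) ^ k =
        ENNReal.ofReal (Real.exp (k * (m' - m) / v * x + -(k * (m' ^ 2 - m ^ 2) / (2 * v)))) := by
    intro x
    rw [gaussianDensityRatio, ← ENNReal.ofReal_pow (Real.exp_nonneg _), ← Real.exp_nat_mul]
    ring_nf
  simp_rw [hpow]
  rw [lintegral_exp_affine_gaussianReal]
  congr 2
  field_simp
  ring

/-- Subsampled Gaussian mechanism, first direction (exact formula): with
`P = N(g, σ²)` and `M = (1−q)·P + q·N(g', σ²)`, for every natural `λ`,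
`∫ ((dM/dP)(w))^{λ+1} dP(w) = Σ_{k=0}^{λ+1} C(λ+1,k) q^k (1−q)^{λ+1−k} exp((k²−k)d²/(2σ²))`
where `d = g' − g`; equivalently, `exp(λ D_{λ+1}(M‖P))` equals the expectation of
`exp((K²−K)d²/(2σ²))` for `K ~ Binomial(λ+1, q)`. -/
theorem subsampled_gaussian_privacy_cost_left
    (σ : ℝ) (hσ : 0 < σ) (q : ℝ) (hq0 : 0 ≤ q) (hq1 : q ≤ 1)
    (g g' : ℝ) (l : ℕ)
    (P : Measure ℝ) (hP : P = gaussianReal g (Real.toNNReal (σ ^ 2)))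
    (M : Measure ℝ)
    (hM : M = (ENNReal.ofReal (1 - q)) • P +
      (ENNReal.ofReal q) • gaussianReal g' (Real.toNNReal (σ ^ 2)))
    (d : ℝ) (hd : d = g' - g) :
    ∫⁻ w, (M.rnDeriv P w) ^ ((l : ℝ) + 1) ∂P =
      ENNReal.ofReal (∑ k ∈ Finset.range (l + 2),
        ((l + 1).choose k : ℝ) * q ^ k * (1 - q) ^ (l + 1 - k) *
          Real.exp (((k : ℝ) ^ 2 - (k : ℝ)) * d ^ 2 / (2 * σ ^ 2))) := by
  set v := Real.toNNReal (σ ^ 2)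
  have hv : v ≠ 0 := (Real.toNNReal_pos.mpr (by positivity)).ne'
  have hvσ : (v : ℝ) = σ ^ 2 := Real.coe_toNNReal _ (by positivity)
  set h : ℝ → ℝ≥0∞ := fun x ↦ ENNReal.ofReal (gaussianDensityRatio g g' v x)
  have : IsProbabilityMeasure P := hP ▸ inferInstance
  have hrn : M.rnDeriv P =ᵐ[P] fun x ↦ ENNReal.ofReal (1 - q) + ENNReal.ofReal q * h x := by
    rw [hM, hP, gaussianReal_eq_withDensity_densityRatio g g' hv, ← hP,
      ← withDensity_const_add_const_mul _ _ _ (by fun_prop)]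
    exact Measure.rnDeriv_withDensity _ (by fun_prop)
  calc ∫⁻ w, (M.rnDeriv P w) ^ ((l : ℝ) + 1) ∂P
      = ∫⁻ w, (ENNReal.ofReal (1 - q) + ENNReal.ofReal q * h w) ^ (l + 1) ∂P :=
        lintegral_congr_ae <| hrn.mono fun w hw ↦ by
          simp only [hw, ← ENNReal.rpow_natCast, Nat.cast_succ]
    _ = ∑ k ∈ Finset.range (l + 2), ((l + 1).choose k : ℝ≥0∞) * ENNReal.ofReal q ^ k *
          ENNReal.ofReal (1 - q) ^ (l + 1 - k) *
          ENNReal.ofReal (Real.exp (((k : ℝ) ^ 2 - k) * (g' - g) ^ 2 / (2 * v))) := by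
        rw [lintegral_const_add_const_mul_pow _ _ _ (by fun_prop)]
        simp_rw [h, hP, lintegral_densityRatio_pow_gaussianReal g g' hv]
    _ = _ := by
        rw [ENNReal.ofReal_sum_of_nonneg fun k _ ↦ by have := sub_nonneg.2 hq1; positivity]
        refine Finset.sum_congr rfl fun k _ ↦ ?_
        rw [hvσ, ← hd, ENNReal.ofReal_mul (by positivity), ENNReal.ofReal_mul (by positivity),
          ENNReal.ofReal_mul (by positivity), ENNReal.ofReal_pow hq0,
          ENNReal.ofReal_pow (sub_nonneg.2 hq1), ENNReal.ofReal_natCast]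
end

section
/- Subsampled Gaussian mechanism, reverse direction (upper bound): let σ > 0, q ∈ [0, 1], g, g' ∈ ℝ, and set d = g' − g. Let P be the Gaussian measure on ℝ with mean g and variance σ², and let M = (1 − q)·P + q·N(g', σ²) be the subsampled-Gaussian mixture. Then for every natural number λ ≥ 1, ∫_ℝ ((dP/dM)(w))^{λ} dP(w) ≤ Σ_{k=0}^{λ} C(λ, k) · q^k · (1 − q)^{λ−k} · exp((k² + k)·d² / (2σ²)); i.e. this moment of the reverse likelihood ratio is at most the expectation of exp((K² + K)·d² / (2σ²)) for K ~ Binomial(λ, q). -/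
/-!
Write `p`, `p'` for the densities of `N(g, σ²)`, `N(g', σ²)` and `m = (1 - q) p + q p'` for the
density of the mixture, so that `dP/dM = p / m`. Convexity of `t ↦ 1 / t` gives
`p / m ≤ (1 - q) + q (p / p')`; raising this to the power `λ` and expanding binomially,
`(p / m)^λ p ≤ ∑ₖ C(λ, k) qᵏ (1 - q)^(λ - k) (p / p')ᵏ p`. Completing the square,
`(p / p')ᵏ p = exp ((k² + k) d² / (2σ²)) · pdf N(g - k d, σ²)`, and each of these Gaussian
densities integrates to one.
-/

set_option autoImplicit false

open MeasureTheory ProbabilityTheory ENNReal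
open scoped NNReal

section WithDensity

variable {α : Type*} [MeasurableSpace α] {μ : Measure α}

lemma ofReal_smul_withDensity_add_ofReal_smul_withDensity {a b : ℝ} (ha : 0 ≤ a) (hb : 0 ≤ b)
    {f h : α → ℝ} (hf : Measurable f) (hf_nonneg : ∀ x, 0 ≤ f x) (hh_nonneg : ∀ x, 0 ≤ h x) :
    ENNReal.ofReal a • μ.withDensity (fun x => ENNReal.ofReal (f x)) +
        ENNReal.ofReal b • μ.withDensity (fun x => ENNReal.ofReal (h x)) =
      μ.withDensity fun x => ENNReal.ofReal (a * f x + b * h x) := by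
  rw [← withDensity_smul' (ENNReal.ofReal a) _ ofReal_ne_top,
    ← withDensity_smul' (ENNReal.ofReal b) _ ofReal_ne_top,
    ← withDensity_add_left (hf.ennreal_ofReal.const_smul _)]
  congr 1
  funext x
  simp only [Pi.add_apply, Pi.smul_apply, smul_eq_mul]
  rw [← ofReal_mul ha, ← ofReal_mul hb,
    ← ofReal_add (mul_nonneg ha (hf_nonneg x)) (mul_nonneg hb (hh_nonneg x))]

variable [SigmaFinite μ] {p m : α → ℝ}

lemma rnDeriv_withDensity_ofReal_ae_eq (hp : Measurable p) (hm : Measurable m)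
    (hm_pos : ∀ x, 0 < m x) :
    (μ.withDensity fun x => ENNReal.ofReal (p x)).rnDeriv
        (μ.withDensity fun x => ENNReal.ofReal (m x))
      =ᵐ[μ.withDensity fun x => ENNReal.ofReal (p x)] fun x => ENNReal.ofReal (p x / m x) := by
  have hratio_meas : Measurable fun x => ENNReal.ofReal (p x / m x) := by fun_prop
  have hP : (μ.withDensity fun x => ENNReal.ofReal (p x)) =
      (μ.withDensity fun x => ENNReal.ofReal (m x)).withDensity
        fun x => ENNReal.ofReal (p x / m x) := by
    rw [← withDensity_mul _ hm.ennreal_ofReal hratio_meas]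
    congr 1
    funext x
    rw [Pi.mul_apply, ← ofReal_mul (hm_pos x).le, mul_div_cancel₀ _ (hm_pos x).ne']
  rw [hP]
  exact (Measure.rnDeriv_withDensity _ hratio_meas).filter_mono
    (withDensity_absolutelyContinuous _ _).ae_le

lemma lintegral_rnDeriv_rpow_withDensity_ofReal (hp : Measurable p) (hm : Measurable m)
    (hp_nonneg : ∀ x, 0 ≤ p x) (hm_pos : ∀ x, 0 < m x) {r : ℝ} (hr : 0 ≤ r) :
    ∫⁻ x, ((μ.withDensity fun x => ENNReal.ofReal (p x)).rnDeriv
        (μ.withDensity fun x => ENNReal.ofReal (m x)) x) ^ r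
          ∂(μ.withDensity fun x => ENNReal.ofReal (p x)) =
      ∫⁻ x, ENNReal.ofReal ((p x / m x) ^ r * p x) ∂μ := by
  have hratio x : 0 ≤ p x / m x := div_nonneg (hp_nonneg x) (hm_pos x).le
  have hratio_meas : Measurable fun x => ENNReal.ofReal (p x / m x) := by fun_prop
  rw [lintegral_congr_ae ((rnDeriv_withDensity_ofReal_ae_eq hp hm hm_pos).mono
      fun x hx => by rw [hx]),
    lintegral_withDensity_eq_lintegral_mul _ hp.ennreal_ofReal
      (hratio_meas.pow_const r)]
  refine lintegral_congr fun x => ?_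
  rw [Pi.mul_apply, ofReal_rpow_of_nonneg (hratio x) hr, mul_comm,
    ofReal_mul (Real.rpow_nonneg (hratio x) r)]

end WithDensity

lemma mixture_pos {a b q : ℝ} (ha : 0 < a) (hb : 0 < b) (hq0 : 0 ≤ q) (hq1 : q ≤ 1) :
    0 < (1 - q) * a + q * b := by
  rcases hq1.lt_or_eq with hq | rfl
  · nlinarith
  · simpa using hb

lemma div_mixture_le_mixture_div {a b q : ℝ} (ha : 0 < a) (hb : 0 < b) (hq0 : 0 ≤ q)
    (hq1 : q ≤ 1) : a / ((1 - q) * a + q * b) ≤ (1 - q) + q * (a / b) := by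
  have hmix := mixture_pos ha hb hq0 hq1
  rw [div_le_iff₀ hmix, ← sub_nonneg]
  have key : ((1 - q) + q * (a / b)) * ((1 - q) * a + q * b) - a =
      q * (1 - q) * (a - b) ^ 2 / b := by
    field_simp
    ring
  rw [key]
  have : 0 ≤ 1 - q := by linarith
  positivity

lemma div_mixture_pow_mul_le {a b q : ℝ} (ha : 0 < a) (hb : 0 < b) (hq0 : 0 ≤ q)
    (hq1 : q ≤ 1) (l : ℕ) :
    (a / ((1 - q) * a + q * b)) ^ l * a ≤
      ∑ k ∈ Finset.range (l + 1),
        (l.choose k : ℝ) * q ^ k * (1 - q) ^ (l - k) * ((a / b) ^ k * a) := by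
  calc (a / ((1 - q) * a + q * b)) ^ l * a ≤ ((1 - q) + q * (a / b)) ^ l * a := by
        gcongr
        exact div_mixture_le_mixture_div ha hb hq0 hq1
    _ = _ := by
        rw [add_comm, add_pow, Finset.sum_mul]
        refine Finset.sum_congr rfl fun k _ => ?_
        ring

lemma gaussianPDFReal_div_pow_mul {v : ℝ≥0} (hv : v ≠ 0) (g d : ℝ) (k : ℕ) (w : ℝ) :
    (gaussianPDFReal g v w / gaussianPDFReal (g + d) v w) ^ k * gaussianPDFReal g v w =
      Real.exp (((k : ℝ) ^ 2 + k) * d ^ 2 / (2 * v)) * gaussianPDFReal (g - k * d) v w := by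
  have hv' : (0 : ℝ) < v := NNReal.coe_pos.2 (pos_iff_ne_zero.2 hv)
  have hs : (0 : ℝ) < Real.sqrt (2 * Real.pi * v) := Real.sqrt_pos.2 (by positivity)
  simp only [gaussianPDFReal]
  rw [mul_div_mul_left _ _ (inv_ne_zero hs.ne'), ← Real.exp_sub, ← Real.exp_nat_mul,
    mul_left_comm, mul_left_comm (Real.exp _), ← Real.exp_add, ← Real.exp_add]
  congr 2
  field_simp
  ring

lemma lintegral_ofReal_sum_mul_gaussianPDFReal {ι : Type*} {v : ℝ≥0} (hv : v ≠ 0)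
    (s : Finset ι) (c m : ι → ℝ) (hc : ∀ k ∈ s, 0 ≤ c k) :
    ∫⁻ x, ENNReal.ofReal (∑ k ∈ s, c k * gaussianPDFReal (m k) v x) =
      ENNReal.ofReal (∑ k ∈ s, c k) := by
  have hint k : Integrable (fun x => c k * gaussianPDFReal (m k) v x) :=
    (integrable_gaussianPDFReal _ _).const_mul _
  rw [← ofReal_integral_eq_lintegral_ofReal (integrable_finsetSum _ fun k _ => hint k)
    (.of_forall fun x => Finset.sum_nonneg fun k hk =>
      mul_nonneg (hc k hk) (gaussianPDFReal_nonneg _ _ _)),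
    integral_finsetSum _ fun k _ => hint k]
  simp only [integral_const_mul, integral_gaussianPDFReal_eq_one _ hv, mul_one]

theorem subsampled_gaussian_privacy_cost_right_general
    (σ : ℝ) (hσ : 0 < σ) (q : ℝ) (hq0 : 0 ≤ q) (hq1 : q ≤ 1)
    (g g' : ℝ) (l : ℕ)
    (P : Measure ℝ) (hP : P = gaussianReal g (Real.toNNReal (σ ^ 2)))
    (M : Measure ℝ)
    (hM : M = (ENNReal.ofReal (1 - q)) • P +
      (ENNReal.ofReal q) • gaussianReal g' (Real.toNNReal (σ ^ 2)))
    (d : ℝ) (hd : d = g' - g) :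
    ∫⁻ w, (P.rnDeriv M w) ^ (l : ℝ) ∂P ≤
      ENNReal.ofReal (∑ k ∈ Finset.range (l + 1),
        (l.choose k : ℝ) * q ^ k * (1 - q) ^ (l - k) *
          Real.exp (((k : ℝ) ^ 2 + (k : ℝ)) * d ^ 2 / (2 * σ ^ 2))) := by
  subst hP hM hd
  set v := Real.toNNReal (σ ^ 2)
  have hv : v ≠ 0 := by simpa [v] using hσ.ne'
  have hvσ : (v : ℝ) = σ ^ 2 := Real.coe_toNNReal _ (sq_nonneg σ)
  have hpdf (μ x : ℝ) : 0 < gaussianPDFReal μ v x := gaussianPDFReal_pos _ _ _ hv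
  have hcoef (k : ℕ) : 0 ≤ (l.choose k : ℝ) * q ^ k * (1 - q) ^ (l - k) *
      Real.exp (((k : ℝ) ^ 2 + k) * (g' - g) ^ 2 / (2 * σ ^ 2)) := by
    have : 0 ≤ 1 - q := by linarith
    positivity
  rw [gaussianReal_of_var_ne_zero _ hv, gaussianReal_of_var_ne_zero _ hv]
  unfold gaussianPDF
  rw [ofReal_smul_withDensity_add_ofReal_smul_withDensity (by linarith) hq0
      (measurable_gaussianPDFReal g v) (fun x => (hpdf g x).le) (fun x => (hpdf g' x).le),
    lintegral_rnDeriv_rpow_withDensity_ofReal (measurable_gaussianPDFReal g v)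
      (by fun_prop) (fun x => (hpdf g x).le)
      (fun x => mixture_pos (hpdf g x) (hpdf g' x) hq0 hq1) l.cast_nonneg,
    ← lintegral_ofReal_sum_mul_gaussianPDFReal hv _ _ (fun k : ℕ => g - k * (g' - g))
      fun k _ => hcoef k]
  refine lintegral_mono fun w => ofReal_le_ofReal ?_
  rw [Real.rpow_natCast]
  refine (div_mixture_pow_mul_le (hpdf g w) (hpdf g' w) hq0 hq1 l).trans_eq
    (Finset.sum_congr rfl fun k _ => ?_)
  rw [← hvσ, mul_assoc _ (Real.exp _), ← gaussianPDFReal_div_pow_mul hv g (g' - g),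
    add_sub_cancel]

/-- Subsampled Gaussian mechanism, reverse direction (upper bound): with
`P = N(g, σ²)` and `M = (1−q)·P + q·N(g', σ²)`, for every natural `λ ≥ 1`,
`∫ ((dP/dM)(w))^{λ} dP(w) ≤ Σ_{k=0}^{λ} C(λ,k) q^k (1−q)^{λ−k} exp((k²+k)d²/(2σ²))`
where `d = g' − g`; i.e. this moment of the reverse likelihood ratio is at most the
expectation of `exp((K²+K)d²/(2σ²))` for `K ~ Binomial(λ, q)`. -/
theorem subsampled_gaussian_privacy_cost_right
    (σ : ℝ) (hσ : 0 < σ) (q : ℝ) (hq0 : 0 ≤ q) (hq1 : q ≤ 1)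
    (g g' : ℝ) (l : ℕ) (hl : 1 ≤ l)
    (P : Measure ℝ) (hP : P = gaussianReal g (Real.toNNReal (σ ^ 2)))
    (M : Measure ℝ)
    (hM : M = (ENNReal.ofReal (1 - q)) • P +
      (ENNReal.ofReal q) • gaussianReal g' (Real.toNNReal (σ ^ 2)))
    (d : ℝ) (hd : d = g' - g) :
    ∫⁻ w, (P.rnDeriv M w) ^ (l : ℝ) ∂P ≤
      ENNReal.ofReal (∑ k ∈ Finset.range (l + 1),
        (l.choose k : ℝ) * q ^ k * (1 - q) ^ (l - k) *
          Real.exp (((k : ℝ) ^ 2 + (k : ℝ)) * d ^ 2 / (2 * σ ^ 2))) :=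
  subsampled_gaussian_privacy_cost_right_general σ hσ q hq0 hq1 g g' l P hP M hM d hd
end
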